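/- arXiv:2107.01465 — 5 statements merged into one kernel-verified Lean document; each statement's English description precedes it below -/
import Mathlib

section
/- Let k ∈ ℕ and define the metric ρ_k on ℕ₀^k by ρ_k(m,m') = Σ_{i=1}^k |√(m_i) − √(m'_i)|. For s = (s₁,…,s_k) ∈ ℕ₀^k define the right shift of a function σ : ℕ₀^k → ℂ by (τ_R^s σ)(m) = σ(m−s) if m_i ≥ s_i for all i = 1,…,k, and (τ_R^s σ)(m) = 0 otherwise. If σ is bounded and uniformly continuous with respect to ρ_k, then τ_R^s σ is bounded and uniformly continuous with respect to ρ_k. -/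
/-!
Consecutive square roots satisfy `√(N+1) - √N ≤ |√a - √b|` whenever `a ≠ b` and `min a b ≤ N`,
so two points of `ℕ^k` closer than this gap agree in every coordinate that is at most `N`.
Taking `N = 2 ∑ sᵢ`, nearby points are either both shifted or both sent to `0`, and on
coordinates `mᵢ, m'ᵢ > 2 sᵢ` subtracting `sᵢ` at most doubles `|√mᵢ - √m'ᵢ|`.
-/

open scoped Classical

namespace Real

lemma abs_sqrt_sub_sqrt_mul_add {x y : ℝ} (hx : 0 ≤ x) (hy : 0 ≤ y) :
    |√x - √y| * (√x + √y) = |x - y| := by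
  rw [← abs_of_nonneg (add_nonneg (sqrt_nonneg x) (sqrt_nonneg y)), ← abs_mul]
  congr 1
  linear_combination sq_sqrt hx - sq_sqrt hy

lemma sqrt_add_one_sub_sqrt {x : ℝ} (hx : 0 ≤ x) :
    √(x + 1) - √x = (√(x + 1) + √x)⁻¹ := by
  apply eq_inv_of_mul_eq_one_left
  linear_combination sq_sqrt (by linarith : 0 ≤ x + 1) - sq_sqrt hx

lemma sqrt_add_one_sub_sqrt_anti {x y : ℝ} (hx : 0 ≤ x) (hxy : x ≤ y) :
    √(y + 1) - √y ≤ √(x + 1) - √x := by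
  rw [sqrt_add_one_sub_sqrt hx, sqrt_add_one_sub_sqrt (hx.trans hxy)]
  exact inv_anti₀ (add_pos_of_pos_of_nonneg (sqrt_pos.2 (by linarith)) (sqrt_nonneg x))
    (add_le_add (sqrt_le_sqrt (by linarith)) (sqrt_le_sqrt hxy))

lemma sqrt_add_one_sub_sqrt_le_abs_sqrt_sub_sqrt {a b N : ℕ} (hab : a ≠ b) (h : min a b ≤ N) :
    √((N : ℝ) + 1) - √N ≤ |√a - √b| := by
  wlog hlt : a < b generalizing a b
  · rw [abs_sub_comm]
    exact this hab.symm (min_comm a b ▸ h) (by omega)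
  have hsqrt : √((a : ℝ) + 1) ≤ √b := sqrt_le_sqrt (by exact_mod_cast hlt)
  calc √((N : ℝ) + 1) - √N ≤ √((a : ℝ) + 1) - √a :=
        sqrt_add_one_sub_sqrt_anti a.cast_nonneg (by exact_mod_cast (min_eq_left hlt.le) ▸ h)
    _ ≤ √b - √a := by linarith
    _ ≤ |√a - √b| := by rw [abs_sub_comm]; exact le_abs_self _

lemma abs_sqrt_sub_sub_sqrt_sub_le {t x y : ℝ} (ht : 0 ≤ t) (hx : 2 * t ≤ x) (hy : 2 * t ≤ y) :
    |√(x - t) - √(y - t)| ≤ 2 * |√x - √y| := by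
  have hsqrt_le : ∀ z, 2 * t ≤ z → √z ≤ 2 * √(z - t) := fun z hz =>
    (sqrt_le_left (by positivity)).2 (by rw [mul_pow, sq_sqrt (by linarith)]; linarith)
  rcases (add_nonneg (sqrt_nonneg (x - t)) (sqrt_nonneg (y - t))).eq_or_lt with hsum | hsum
  · obtain ⟨hx0, hy0⟩ := (add_eq_zero_iff_of_nonneg (sqrt_nonneg _) (sqrt_nonneg _)).1 hsum.symm
    simp [hx0, hy0]
  refine le_of_mul_le_mul_right ?_ hsum
  calc |√(x - t) - √(y - t)| * (√(x - t) + √(y - t)) = |√x - √y| * (√x + √y) := by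
        rw [abs_sqrt_sub_sqrt_mul_add (by linarith) (by linarith),
          abs_sqrt_sub_sqrt_mul_add (by linarith) (by linarith), sub_sub_sub_cancel_right]
    _ ≤ |√x - √y| * (2 * (√(x - t) + √(y - t))) := by
        gcongr
        linarith [hsqrt_le x hx, hsqrt_le y hy]
    _ = 2 * |√x - √y| * (√(x - t) + √(y - t)) := by ring

end Real

section SqrtDist

variable {ι E : Type*} [Fintype ι] [SeminormedAddCommGroup E]

noncomputable def sqrtDist (m m' : ι → ℕ) : ℝ :=
  ∑ i, |√(m i : ℝ) - √(m' i : ℝ)|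

def SqrtUniformContinuous (σ : (ι → ℕ) → E) : Prop :=
  ∀ ε > (0 : ℝ), ∃ δ > (0 : ℝ), ∀ m m', sqrtDist m m' < δ → ‖σ m - σ m'‖ < ε

noncomputable def rightShift (s : ι → ℕ) (σ : (ι → ℕ) → E) (m : ι → ℕ) : E :=
  if ∀ i, s i ≤ m i then σ (m - s) else 0

lemma abs_sqrt_sub_sqrt_le_sqrtDist (m m' : ι → ℕ) (i : ι) :
    |√(m i : ℝ) - √(m' i : ℝ)| ≤ sqrtDist m m' :=
  Finset.single_le_sum (f := fun j => |√(m j : ℝ) - √(m' j : ℝ)|)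
    (fun _ _ => abs_nonneg _) (Finset.mem_univ i)

lemma eq_or_lt_of_sqrtDist_lt {m m' : ι → ℕ} {N : ℕ}
    (h : sqrtDist m m' < √((N : ℝ) + 1) - √N) (i : ι) :
    m i = m' i ∨ N < m i ∧ N < m' i := by
  refine or_iff_not_imp_left.2 fun hne => ?_
  by_contra hsmall
  have hgap := Real.sqrt_add_one_sub_sqrt_le_abs_sqrt_sub_sqrt hne (N := N) (by omega)
  linarith [abs_sqrt_sub_sqrt_le_sqrtDist m m' i]

lemma sqrtDist_tsub_le {m m' s : ι → ℕ}
    (h : ∀ i, m i = m' i ∨ 2 * s i < m i ∧ 2 * s i < m' i) :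
    sqrtDist (m - s) (m' - s) ≤ 2 * sqrtDist m m' := by
  rw [sqrtDist, sqrtDist, Finset.mul_sum]
  gcongr with i
  rcases h i with heq | ⟨hm, hm'⟩
  · simp [heq]
  · simp only [Pi.sub_apply]
    rw [Nat.cast_sub (by omega), Nat.cast_sub (by omega)]
    exact Real.abs_sqrt_sub_sub_sqrt_sub_le (Nat.cast_nonneg _)
      (by exact_mod_cast hm.le) (by exact_mod_cast hm'.le)

lemma exists_norm_rightShift_le {σ : (ι → ℕ) → E} (hσ : ∃ C, ∀ m, ‖σ m‖ ≤ C) (s : ι → ℕ) :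
    ∃ C, ∀ m, ‖rightShift s σ m‖ ≤ C := by
  obtain ⟨C, hC⟩ := hσ
  refine ⟨max C 0, fun m => ?_⟩
  unfold rightShift
  split_ifs
  · exact (hC _).trans (le_max_left _ _)
  · simp

lemma SqrtUniformContinuous.rightShift {σ : (ι → ℕ) → E} (hσ : SqrtUniformContinuous σ)
    (s : ι → ℕ) : SqrtUniformContinuous (rightShift s σ) := by
  intro ε hε
  obtain ⟨δ, hδ, hσδ⟩ := hσ ε hε
  set N := 2 * ∑ i, s i
  have hsN : ∀ i, 2 * s i ≤ N := fun i =>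
    Nat.mul_le_mul_left 2 (Finset.single_le_sum (fun _ _ => Nat.zero_le _) (Finset.mem_univ i))
  have hgap : 0 < √((N : ℝ) + 1) - √N :=
    sub_pos.2 (Real.sqrt_lt_sqrt N.cast_nonneg (lt_add_one _))
  refine ⟨min (δ / 2) (√((N : ℝ) + 1) - √N), lt_min (half_pos hδ) hgap, fun m m' hmm' => ?_⟩
  have hcoord := eq_or_lt_of_sqrtDist_lt (hmm'.trans_le (min_le_right _ _))
  have hiff : (∀ i, s i ≤ m i) ↔ ∀ i, s i ≤ m' i := forall_congr' fun i => by
    rcases hcoord i with h | h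
    · rw [h]
    · have := hsN i; omega
  unfold _root_.rightShift
  by_cases hm : ∀ i, s i ≤ m i
  · rw [if_pos hm, if_pos (hiff.1 hm)]
    apply hσδ
    calc sqrtDist (m - s) (m' - s) ≤ 2 * sqrtDist m m' :=
          sqrtDist_tsub_le fun i => (hcoord i).imp_right fun h => by have := hsN i; omega
      _ < 2 * (δ / 2) := by linarith [hmm'.trans_le (min_le_left _ _)]
      _ = δ := by ring
  · rwa [if_neg hm, if_neg (mt hiff.2 hm), sub_zero, norm_zero]

end SqrtDist

/-- The right shift `τ_R^s σ`, given by `σ(m − s)` when `m ≥ s` componentwise and `0`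
otherwise, of a bounded, `ρ_k`-uniformly continuous function on `ℕ₀^k` is bounded and
`ρ_k`-uniformly continuous. -/
theorem stmt6 (k : ℕ) (s : Fin k → ℕ) (σ : (Fin k → ℕ) → ℂ)
    (hbd : ∃ C, ∀ m : Fin k → ℕ, ‖σ m‖ ≤ C)
    (huc : ∀ ε > (0 : ℝ), ∃ δ > (0 : ℝ), ∀ m m' : Fin k → ℕ,
        (∑ i, |Real.sqrt (m i) - Real.sqrt (m' i)|) < δ → ‖σ m - σ m'‖ < ε) :
    (∃ C, ∀ m : Fin k → ℕ,
        ‖(if ∀ i, s i ≤ m i then σ (fun i => m i - s i) else 0 : ℂ)‖ ≤ C) ∧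
    (∀ ε > (0 : ℝ), ∃ δ > (0 : ℝ), ∀ m m' : Fin k → ℕ,
        (∑ i, |Real.sqrt (m i) - Real.sqrt (m' i)|) < δ →
          ‖(if ∀ i, s i ≤ m i then σ (fun i => m i - s i) else 0 : ℂ) -
            (if ∀ i, s i ≤ m' i then σ (fun i => m' i - s i) else 0 : ℂ)‖ < ε) := by
  have hshift (m : Fin k → ℕ) :
      rightShift s σ m = if ∀ i, s i ≤ m i then σ (fun i => m i - s i) else 0 := by
    unfold rightShift
    -- the two `if`s differ only in their `Decidable` instance
    congr
  simp only [← hshift]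
  exact ⟨exists_norm_rightShift_le hbd s, SqrtUniformContinuous.rightShift (σ := σ) huc s⟩
end

section
/- For every integer m ≥ 1, ∫₀^∞ |r^m/m! − r^{m−1}/(m−1)!| e^{−r} dr ≤ √(2/(π m)). -/
open MeasureTheory Real Set Filter Topology

/-!
The integrand is `|F'|` for `F r = -r ^ m e^{-r} / m!`, and `F'` changes sign exactly once, at
`r = m`. Splitting the integral there gives `F 0 - 2 F m = 2 m ^ m e^{-m} / m!`, and Stirling's
lower bound `m! ≥ √(2πm) (m / e) ^ m` turns this into `√(2 / (π m))`.
-/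

theorem integral_Ioi_abs_deriv_eq_of_sign_change {F f : ℝ → ℝ} {a b l : ℝ} (hab : a ≤ b)
    (hderiv : ∀ x ∈ Ici a, HasDerivAt F (f x) x) (hneg : ∀ x ∈ Ioc a b, f x ≤ 0)
    (hpos : ∀ x ∈ Ioi b, 0 ≤ f x) (hlim : Tendsto F atTop (𝓝 l)) :
    ∫ x in Ioi a, |f x| = F a - 2 * F b + l := by
  have hcont : ContinuousOn F (Icc a b) := fun x hx =>
    (hderiv x hx.1).continuousAt.continuousWithinAt
  have hint₁ : IntegrableOn f (Ioc a b) := by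
    simpa using (intervalIntegral.integrableOn_deriv_of_nonneg hcont.neg
      (fun x hx => (hderiv x hx.1.le).neg)
      (fun x hx => neg_nonneg.2 (hneg x (Ioo_subset_Ioc_self hx)))).neg
  have hderiv₂ : ∀ x ∈ Ici b, HasDerivAt F (f x) x := fun x hx =>
    hderiv x (Ici_subset_Ici.2 hab hx)
  have h₁ : ∫ x in Ioc a b, |f x| = F a - F b := by
    rw [setIntegral_congr_fun measurableSet_Ioc (fun x hx => abs_of_nonpos (hneg x hx)),
      integral_neg, ← intervalIntegral.integral_of_le hab,
      intervalIntegral.integral_eq_sub_of_hasDerivAt_of_le hab hcont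
        (fun x hx => hderiv x hx.1.le)
        ((intervalIntegrable_iff_integrableOn_Ioc_of_le hab).2 hint₁),
      neg_sub]
  have h₂ : ∫ x in Ioi b, |f x| = l - F b := by
    rw [setIntegral_congr_fun measurableSet_Ioi (fun x hx => abs_of_nonneg (hpos x hx)),
      integral_Ioi_of_hasDerivAt_of_nonneg' hderiv₂ hpos hlim]
  rw [← Ioc_union_Ioi_eq_Ioi hab, setIntegral_union (Ioc_disjoint_Ioi le_rfl) measurableSet_Ioi
    hint₁.abs (integrableOn_Ioi_deriv_of_nonneg' hderiv₂ hpos hlim).abs, h₁, h₂]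
  ring

theorem pow_succ_div_factorial_sub_pow_div_factorial (n : ℕ) (r : ℝ) :
    r ^ (n + 1) / (n + 1).factorial - r ^ n / n.factorial
      = r ^ n / (n + 1).factorial * (r - (n + 1)) := by
  rw [Nat.factorial_succ]
  push_cast
  field_simp
  ring

theorem pow_succ_div_factorial_sub_pow_div_factorial_nonpos {n : ℕ} {r : ℝ} (h₀ : 0 ≤ r)
    (h₁ : r ≤ n + 1) : r ^ (n + 1) / (n + 1).factorial - r ^ n / n.factorial ≤ 0 := by
  rw [pow_succ_div_factorial_sub_pow_div_factorial]
  exact mul_nonpos_of_nonneg_of_nonpos (by positivity) (by linarith)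

theorem pow_succ_div_factorial_sub_pow_div_factorial_nonneg {n : ℕ} {r : ℝ} (h : n + 1 ≤ r) :
    0 ≤ r ^ (n + 1) / (n + 1).factorial - r ^ n / n.factorial := by
  have : (0 : ℝ) ≤ r := by linarith [n.cast_nonneg (α := ℝ)]
  rw [pow_succ_div_factorial_sub_pow_div_factorial]
  exact mul_nonneg (by positivity) (by linarith)

theorem hasDerivAt_neg_pow_succ_div_factorial_mul_exp_neg (n : ℕ) (r : ℝ) :
    HasDerivAt (fun r => -(r ^ (n + 1) / (n + 1).factorial * exp (-r)))
      ((r ^ (n + 1) / (n + 1).factorial - r ^ n / n.factorial) * exp (-r)) r := by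
  have h := (((hasDerivAt_pow (n + 1) r).div_const ((n + 1).factorial : ℝ)).mul
    ((hasDerivAt_neg r).exp)).neg
  refine h.congr_deriv ?_
  rw [Nat.factorial_succ]
  push_cast
  field_simp
  ring

theorem two_mul_pow_mul_exp_neg_div_factorial_le (n : ℕ) (hn : n ≠ 0) :
    2 * (n ^ n * exp (-n) / n.factorial) ≤ √(2 / (π * n)) := by
  have hn' : (0 : ℝ) < n := by exact_mod_cast hn.bot_lt
  have hstirling := Stirling.le_factorial_stirling n
  have hpow : (n / exp 1 : ℝ) ^ n = n ^ n * exp (-n) := by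
    rw [div_pow, ← exp_nat_mul, mul_one, exp_neg, div_eq_mul_inv]
  have hsqrt : √(2 / (π * n)) = 2 / √(2 * π * n) := by
    rw [eq_div_iff (by positivity), ← sqrt_mul (by positivity)]
    rw [show 2 / (π * n) * (2 * π * n) = 2 ^ 2 by field_simp, sqrt_sq zero_le_two]
  rw [hsqrt, ← hpow, mul_div_assoc', div_le_div_iff₀ (by positivity) (by positivity)]
  rw [mul_assoc, mul_comm _ √_]
  exact mul_le_mul_of_nonneg_left hstirling zero_le_two

/-- For every `m ≥ 1`, `∫₀^∞ |r^m/m! − r^{m−1}/(m−1)!| e^{−r} dr ≤ √(2/(π m))`. -/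
theorem stmt8 (m : ℕ) (hm : 1 ≤ m) :
    (∫ r in Set.Ioi (0 : ℝ),
        |r ^ m / (m.factorial : ℝ) - r ^ (m - 1) / ((m - 1).factorial : ℝ)| *
          Real.exp (-r))
      ≤ Real.sqrt (2 / (Real.pi * m)) := by
  obtain ⟨n, rfl⟩ := Nat.exists_eq_add_of_le' hm
  rw [Nat.add_sub_cancel]
  have hint := integral_Ioi_abs_deriv_eq_of_sign_change (a := 0) (b := n + 1) (l := 0)
    (by positivity) (fun r _ => hasDerivAt_neg_pow_succ_div_factorial_mul_exp_neg n r)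
    (fun r hr => mul_nonpos_of_nonpos_of_nonneg
      (pow_succ_div_factorial_sub_pow_div_factorial_nonpos hr.1.le hr.2) (exp_pos _).le)
    (fun r hr => mul_nonneg
      (pow_succ_div_factorial_sub_pow_div_factorial_nonneg (le_of_lt hr)) (exp_pos _).le)
    (by simpa [div_mul_eq_mul_div] using
      ((tendsto_pow_mul_exp_neg_atTop_nhds_zero (n + 1)).div_const ((n + 1).factorial : ℝ)).neg)
  simp only [abs_mul, abs_of_pos (exp_pos _)] at hint
  rw [hint]
  simpa [div_mul_eq_mul_div] using two_mul_pow_mul_exp_neg_div_factorial_le (n + 1) n.succ_ne_zero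
end

section
/- For all m, m' ∈ ℕ₀, ∫₀^∞ |r^m/m! − r^{m'}/m'!| e^{−r} dr ≤ 2√(2/π) · |√m − √(m')|. -/
open MeasureTheory Real Set
open scoped Nat

/-!
Write `p_k(r) = r^k e^{-r} / k!`. By the triangle inequality it suffices to treat `m' = m + 1`.
Since `p_k - p_{k+1} = p_{k+1}'` has total integral `0` and changes sign exactly at `r = k + 1`,
`∫ |p_k - p_{k+1}| = 2 p_{k+1}(k+1)`, and Stirling's lower bound for `(k+1)!` gives
`p_{k+1}(k+1) ≤ 1 / √(2π(k+1)) ≤ √(2/π) (√(k+1) - √k)`.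
-/

theorem integral_abs_sub_le_add {α : Type*} [MeasurableSpace α] {μ : Measure α}
    {f g h : α → ℝ} (hf : Integrable f μ) (hg : Integrable g μ) (hh : Integrable h μ) :
    ∫ x, |f x - h x| ∂μ ≤ (∫ x, |f x - g x| ∂μ) + ∫ x, |g x - h x| ∂μ := by
  refine (integral_mono (hf.sub hh).abs ((hf.sub hg).abs.add (hg.sub hh).abs)
    fun x => abs_sub_le (f x) (g x) (h x)).trans_eq ?_
  exact integral_add (hf.sub hg).abs (hg.sub hh).abs

theorem integral_abs_eq_two_mul_setIntegral_Ioc {f : ℝ → ℝ} {a b : ℝ} (hab : a ≤ b)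
    (hf : IntegrableOn f (Ioi a)) (hf_zero : ∫ x in Ioi a, f x = 0)
    (hf_nonneg : ∀ x ∈ Ioc a b, 0 ≤ f x) (hf_nonpos : ∀ x ∈ Ioi b, f x ≤ 0) :
    ∫ x in Ioi a, |f x| = 2 * ∫ x in Ioc a b, f x := by
  have split : ∀ g : ℝ → ℝ, IntegrableOn g (Ioi a) →
      ∫ x in Ioi a, g x = (∫ x in Ioc a b, g x) + ∫ x in Ioi b, g x := fun g hg => by
    rw [← Ioc_union_Ioi_eq_Ioi hab] at hg ⊢
    exact setIntegral_union (Ioc_disjoint_Ioi le_rfl) measurableSet_Ioi hg.left_of_union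
      hg.right_of_union
  have h_left : ∫ x in Ioc a b, |f x| = ∫ x in Ioc a b, f x :=
    setIntegral_congr_fun measurableSet_Ioc fun x hx => abs_of_nonneg (hf_nonneg x hx)
  have h_right : ∫ x in Ioi b, |f x| = -∫ x in Ioi b, f x := by
    rw [← integral_neg]
    exact setIntegral_congr_fun measurableSet_Ioi fun x hx => abs_of_nonpos (hf_nonpos x hx)
  rw [split f hf] at hf_zero
  rw [split _ hf.abs, h_left, h_right]
  linarith

-- `P(N = k)` for `N` Poisson of mean `r`; as a function of `r`, the density of `Gamma(k+1, 1)`.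
noncomputable def poissonWeight (k : ℕ) (r : ℝ) : ℝ := r ^ k * exp (-r) / k !

lemma poissonWeight_nonneg (k : ℕ) {r : ℝ} (hr : 0 ≤ r) : 0 ≤ poissonWeight k r := by
  unfold poissonWeight; positivity

lemma poissonWeight_succ (k : ℕ) (r : ℝ) :
    poissonWeight (k + 1) r = poissonWeight k r * (r / (k + 1)) := by
  simp only [poissonWeight, Nat.factorial_succ, Nat.cast_mul, Nat.cast_succ, pow_succ]
  field_simp

lemma poissonWeight_eq_gamma_integrand (k : ℕ) (r : ℝ) :
    poissonWeight k r = exp (-r) * r ^ ((k + 1 : ℝ) - 1) / k ! := by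
  rw [add_sub_cancel_right, rpow_natCast, poissonWeight, mul_comm (r ^ k)]

lemma integrableOn_poissonWeight (k : ℕ) : IntegrableOn (poissonWeight k) (Ioi 0) := by
  exact IntegrableOn.congr_fun ((GammaIntegral_convergent (by positivity)).div_const (k ! : ℝ))
    (fun r _ => (poissonWeight_eq_gamma_integrand k r).symm) measurableSet_Ioi

lemma integral_poissonWeight (k : ℕ) : ∫ r in Ioi 0, poissonWeight k r = 1 := by
  simp only [poissonWeight_eq_gamma_integrand]
  rw [integral_div, ← Gamma_eq_integral (by positivity), Gamma_nat_eq_factorial,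
    div_self (by positivity)]

lemma hasDerivAt_poissonWeight_succ (k : ℕ) (r : ℝ) :
    HasDerivAt (poissonWeight (k + 1)) (poissonWeight k r - poissonWeight (k + 1) r) r := by
  have hpow : HasDerivAt (fun r : ℝ => r ^ (k + 1)) ((k + 1 : ℕ) * r ^ k) r :=
    hasDerivAt_pow _ r
  have hexp : HasDerivAt (fun r : ℝ => exp (-r)) (-exp (-r)) r := by
    simpa using (hasDerivAt_neg r).exp
  refine ((hpow.mul hexp).div_const ((k + 1) ! : ℝ)).congr_deriv ?_
  simp only [poissonWeight, Nat.factorial_succ, Nat.cast_mul]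
  field_simp
  ring

@[fun_prop]
lemma continuous_poissonWeight (k : ℕ) : Continuous (poissonWeight k) := by
  unfold poissonWeight; fun_prop

lemma setIntegral_Ioc_poissonWeight_sub_succ (k : ℕ) {a : ℝ} (ha : 0 ≤ a) :
    ∫ r in Ioc 0 a, (poissonWeight k r - poissonWeight (k + 1) r) = poissonWeight (k + 1) a := by
  rw [← intervalIntegral.integral_of_le ha,
    intervalIntegral.integral_eq_sub_of_hasDerivAt (fun r _ => hasDerivAt_poissonWeight_succ k r)
      (Continuous.intervalIntegrable (by fun_prop) _ _)]
  simp [poissonWeight]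

lemma integral_abs_poissonWeight_sub_succ (k : ℕ) :
    ∫ r in Ioi 0, |poissonWeight k r - poissonWeight (k + 1) r|
      = 2 * poissonWeight (k + 1) (k + 1) := by
  have hk : (0 : ℝ) < k + 1 := by positivity
  have h_factor : ∀ r, poissonWeight k r - poissonWeight (k + 1) r
      = poissonWeight k r * (1 - r / (k + 1)) := fun r => by
    rw [poissonWeight_succ]; ring
  rw [integral_abs_eq_two_mul_setIntegral_Ioc
    (f := fun r => poissonWeight k r - poissonWeight (k + 1) r) hk.le
    ((integrableOn_poissonWeight k).sub (integrableOn_poissonWeight (k + 1))),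
    setIntegral_Ioc_poissonWeight_sub_succ k hk.le]
  · rw [integral_sub (integrableOn_poissonWeight k) (integrableOn_poissonWeight (k + 1)),
      integral_poissonWeight, integral_poissonWeight, sub_self]
  · intro r ⟨hr, hrk⟩
    rw [h_factor]
    exact mul_nonneg (poissonWeight_nonneg k hr.le) (sub_nonneg.2 ((div_le_one hk).2 hrk))
  · intro r hr
    rw [h_factor]
    exact mul_nonpos_of_nonneg_of_nonpos (poissonWeight_nonneg k (hk.le.trans hr.le))
      (sub_nonpos.2 ((one_le_div hk).2 hr.le))

lemma poissonWeight_self_mul_sqrt_le_one (n : ℕ) : poissonWeight n n * √(2 * π * n) ≤ 1 := by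
  have h_pow : (n : ℝ) ^ n * exp (-n) = (n / exp 1) ^ n := by
    rw [div_pow, ← exp_nat_mul, mul_one, exp_neg, div_eq_mul_inv]
  rw [poissonWeight, h_pow, div_mul_eq_mul_div, mul_comm, div_le_one (by positivity)]
  exact Stirling.le_factorial_stirling n

lemma one_le_two_mul_sqrt_succ_mul_sub_sqrt {x : ℝ} (hx : 0 ≤ x) :
    1 ≤ 2 * √(x + 1) * (√(x + 1) - √x) := by
  have h_sq : √(x + 1) ^ 2 = x + 1 := sq_sqrt (by linarith)
  have h_sq' : √x ^ 2 = x := sq_sqrt hx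
  nlinarith [sq_nonneg (√(x + 1) - √x)]

lemma integral_abs_poissonWeight_sub_succ_le (k : ℕ) :
    ∫ r in Ioi 0, |poissonWeight k r - poissonWeight (k + 1) r|
      ≤ 2 * √(2 / π) * (√(k + 1) - √k) := by
  have h_stirling := poissonWeight_self_mul_sqrt_le_one (k + 1)
  have h_sqrt := one_le_two_mul_sqrt_succ_mul_sub_sqrt (Nat.cast_nonneg k : (0 : ℝ) ≤ k)
  have h_prod : √(2 / π) * √(2 * π * (k + 1)) = 2 * √(k + 1) := by
    rw [← sqrt_mul (by positivity), show 2 / π * (2 * π * (k + 1)) = 2 ^ 2 * (k + 1) by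
      field_simp, sqrt_mul (by positivity), sqrt_sq zero_le_two]
  push_cast at h_stirling
  rw [integral_abs_poissonWeight_sub_succ]
  refine le_of_mul_le_mul_right ?_ (by positivity : 0 < √(2 * π * (k + 1)))
  calc 2 * poissonWeight (k + 1) (k + 1) * √(2 * π * (k + 1)) ≤ 2 := by linarith
    _ ≤ 2 * (2 * √(k + 1) * (√(k + 1) - √k)) := by linarith
    _ = 2 * √(2 / π) * (√(k + 1) - √k) * √(2 * π * (k + 1)) := by rw [← h_prod]; ring

lemma integral_abs_poissonWeight_sub_le_of_le {m m' : ℕ} (h : m ≤ m') :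
    ∫ r in Ioi 0, |poissonWeight m r - poissonWeight m' r|
      ≤ 2 * √(2 / π) * (√m' - √m) := by
  induction m', h using Nat.le_induction with
  | base => simp
  | succ k _ ih =>
    calc ∫ r in Ioi 0, |poissonWeight m r - poissonWeight (k + 1) r|
        ≤ (∫ r in Ioi 0, |poissonWeight m r - poissonWeight k r|)
          + ∫ r in Ioi 0, |poissonWeight k r - poissonWeight (k + 1) r| :=
          integral_abs_sub_le_add (integrableOn_poissonWeight m) (integrableOn_poissonWeight k)
            (integrableOn_poissonWeight (k + 1))
      _ ≤ 2 * √(2 / π) * (√k - √m) + 2 * √(2 / π) * (√(k + 1) - √k) :=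
          add_le_add ih (integral_abs_poissonWeight_sub_succ_le k)
      _ = 2 * √(2 / π) * (√(k + 1 : ℕ) - √m) := by push_cast; ring

lemma integral_abs_poissonWeight_sub_le (m m' : ℕ) :
    ∫ r in Ioi 0, |poissonWeight m r - poissonWeight m' r|
      ≤ 2 * √(2 / π) * |√m - √m'| := by
  wlog h : m ≤ m' generalizing m m'
  · simp_rw [abs_sub_comm (poissonWeight m _), abs_sub_comm √(m : ℝ)]
    exact this m' m (le_of_not_ge h)
  rw [abs_sub_comm, abs_of_nonneg (sub_nonneg.2 (Real.sqrt_le_sqrt (Nat.cast_le.2 h)))]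
  exact integral_abs_poissonWeight_sub_le_of_le h

/-- For all `m, m' ∈ ℕ₀`,
`∫₀^∞ |r^m/m! − r^{m'}/m'!| e^{−r} dr ≤ 2√(2/π) |√m − √m'|`. -/
theorem stmt9 (m m' : ℕ) :
    (∫ r in Set.Ioi (0 : ℝ),
        |r ^ m / (m.factorial : ℝ) - r ^ m' / (m'.factorial : ℝ)| * Real.exp (-r))
      ≤ 2 * Real.sqrt (2 / Real.pi) * |Real.sqrt m - Real.sqrt m'| := by
  have h_integrand : ∀ r : ℝ, |poissonWeight m r - poissonWeight m' r|
      = |r ^ m / (m.factorial : ℝ) - r ^ m' / (m'.factorial : ℝ)| * exp (-r) := fun r => by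
    rw [← abs_of_pos (exp_pos (-r)), ← abs_mul, poissonWeight, poissonWeight]
    congr 1
    ring
  simp_rw [← h_integrand]
  exact integral_abs_poissonWeight_sub_le m m'
end

section
/- Let k ∈ ℕ, n = (n₁,…,n_k) ∈ ℕ^k, and let a : (0,∞)^k → ℂ be bounded and measurable with ‖a‖_∞ = ess sup |a|. Define γ_{n,a}(m) = (1/∏_{j=1}^k (m_j+n_j−1)!) ∫_{(0,∞)^k} a(√r₁,…,√r_k) ∏_{j=1}^k r_j^{m_j+n_j−1} e^{−(r₁+⋯+r_k)} dr₁⋯dr_k for m ∈ ℕ₀^k. Then γ_{n,a} is Lipschitz with respect to the square-root metric: |γ_{n,a}(m) − γ_{n,a}(m')| ≤ 2√(2/π) · ‖a‖_∞ · ρ_k(m,m') for all m, m' ∈ ℕ₀^k. In particular γ_{n,a} is bounded and uniformly continuous with respect to ρ_k. -/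
/-!
Write `p = m + n - 1` coordinatewise and `g_p(r) = r^p e^{-r} / p!` for the Gamma(p + 1, 1)
density on `(0, ∞)`. Then `γ(m) = ∫ a(√r) ∏ⱼ g_{pⱼ}(rⱼ) dr`, so `|γ(m) - γ(m')|` is at most
`‖a‖_∞` times the `L¹` distance of two product densities, which is at most the sum of the
coordinatewise `L¹` distances. In one variable `g_{p+1}' = g_p - g_{p+1}` and the two
densities cross at `r = p + 1`, so `‖g_p - g_{p+1}‖₁ = 2 g_{p+1}(p + 1)`, which Stirling's
lower bound for `(p + 1)!` bounds by `2 / √(2π(p + 1)) ≤ 2√(2/π) (√(p + 1) - √p)`.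
Telescoping gives `‖g_p - g_q‖₁ ≤ 2√(2/π) |√p - √q|`, and the shift by `n - 1` only
decreases square-root distances.
-/

open MeasureTheory Set Real Filter
open scoped Nat

lemma one_div_sqrt_add_one_le {x : ℝ} (hx : 0 ≤ x) :
    1 / √(x + 1) ≤ 2 * (√(x + 1) - √x) := by
  have := sq_sqrt (by linarith : 0 ≤ x + 1)
  have := sq_sqrt hx
  rw [div_le_iff₀ (sqrt_pos.2 (by linarith))]
  nlinarith [sq_nonneg (√(x + 1) - √x)]

lemma abs_sqrt_add_sub_sqrt_add_le {x y c : ℝ} (hx : 0 ≤ x) (hy : 0 ≤ y) (hc : 0 ≤ c) :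
    |√(x + c) - √(y + c)| ≤ |√x - √y| := by
  wlog hyx : y ≤ x generalizing x y
  · rw [abs_sub_comm, abs_sub_comm √x]
    exact this hy hx (le_of_not_ge hyx)
  have := sq_sqrt hx
  have := sq_sqrt hy
  have := sq_sqrt (add_nonneg hx hc)
  have := sq_sqrt (add_nonneg hy hc)
  have := sqrt_le_sqrt hyx
  have := sqrt_le_sqrt (by linarith : y + c ≤ x + c)
  have := sqrt_le_sqrt (le_add_of_nonneg_right hc : y ≤ y + c)
  have := sqrt_le_sqrt (le_add_of_nonneg_right hc : x ≤ x + c)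
  rw [abs_of_nonneg (by linarith), abs_of_nonneg (by linarith)]
  -- `√(x + c) - √(y + c) = (x - y) / (√(x + c) + √(y + c)) ≤ (x - y) / (√x + √y) = √x - √y`
  nlinarith [sqrt_nonneg y, sqrt_nonneg x]

theorem forall_exists_norm_sub_lt_of_norm_sub_le_mul {α E : Type*} [SeminormedAddCommGroup E]
    {f : α → E} {d : α → α → ℝ} {L : ℝ} (hL : 0 ≤ L) (hf : ∀ x y, ‖f x - f y‖ ≤ L * d x y) :
    ∀ ε > (0 : ℝ), ∃ δ > (0 : ℝ), ∀ x y, d x y < δ → ‖f x - f y‖ < ε := by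
  intro ε hε
  refine ⟨ε / (L + 1), by positivity, fun x y hxy => ?_⟩
  calc ‖f x - f y‖ ≤ L * d x y := hf x y
    _ ≤ L * (ε / (L + 1)) := by gcongr
    _ < ε := by rw [mul_div_assoc', div_lt_iff₀ (by positivity)]; nlinarith

section ProductDensities

variable {ι : Type*} [Fintype ι] {E : ι → Type*} [∀ i, MeasurableSpace (E i)]
  {μ : ∀ i, Measure (E i)} [∀ i, SigmaFinite (μ i)]

theorem integral_abs_prod_sub_prod_le_sum {f g : ∀ i, E i → ℝ}
    (hf : ∀ i, Integrable (f i) (μ i)) (hg : ∀ i, Integrable (g i) (μ i))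
    (hf0 : ∀ i, 0 ≤ᵐ[μ i] f i) (hg0 : ∀ i, 0 ≤ᵐ[μ i] g i)
    (hf1 : ∀ i, ∫ x, f i x ∂μ i = 1) (hg1 : ∀ i, ∫ x, g i x ∂μ i = 1) :
    ∫ x, |∏ i, f i (x i) - ∏ i, g i (x i)| ∂Measure.pi μ ≤ ∑ i, ∫ t, |f i t - g i t| ∂μ i := by
  let : LinearOrder ι := LinearOrder.lift' _ (Fintype.equivFin ι).injective
  -- the `i`-th term of `∏ f - ∏ g = ∑ i, (∏_{j<i} f j) (f i - g i) (∏_{j>i} g j)`, with `|·|`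
  let h (i j : ι) : E j → ℝ :=
    if j < i then f j else if i < j then g j else fun t => |f j t - g j t|
  have h_prod (i : ι) (x : ∀ j, E j) : ∏ j, h i j (x j) =
      |f i (x i) - g i (x i)| * (∏ j with j < i, f j (x j)) * ∏ j with i < j, g j (x j) := by
    have h_gt : Finset.univ.filter (fun j => ¬j < i ∧ i < j) = Finset.univ.filter (i < ·) :=
      Finset.filter_congr fun j _ => ⟨And.right, fun hij => ⟨hij.not_gt, hij⟩⟩
    have h_eq : Finset.univ.filter (fun j => ¬j < i ∧ ¬i < j) = {i} := by
      ext j; simp [le_antisymm_iff, and_comm]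
    simp only [h, ite_apply, Finset.prod_ite, Finset.filter_filter, h_gt, h_eq,
      Finset.prod_singleton]
    ring
  have h_abs (x : ∀ j, E j) (hfx : ∀ j, 0 ≤ f j (x j)) (hgx : ∀ j, 0 ≤ g j (x j)) :
      |∏ i, f i (x i) - ∏ i, g i (x i)| ≤ ∑ i, ∏ j, h i j (x j) := by
    have := Finset.prod_add_ordered Finset.univ (fun i => g i (x i))
      (fun i => f i (x i) - g i (x i))
    simp only [add_sub_cancel] at this
    rw [this, add_sub_cancel_left]
    refine (Finset.abs_sum_le_sum_abs _ _).trans (Finset.sum_le_sum fun i _ => ?_)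
    rw [h_prod, abs_mul, abs_mul, abs_of_nonneg (Finset.prod_nonneg fun j _ => hfx j),
      abs_of_nonneg (Finset.prod_nonneg fun j _ => hgx j)]
  have h_int (i : ι) : Integrable (fun x => ∏ j, h i j (x j)) (Measure.pi μ) :=
    Integrable.fintype_prod_dep fun j => by
      simp only [h]
      split_ifs
      exacts [hf j, hg j, ((hf j).sub (hg j)).abs]
  have h_integral (i : ι) :
      ∫ x, ∏ j, h i j (x j) ∂Measure.pi μ = ∫ t, |f i t - g i t| ∂μ i := by
    rw [integral_fintype_prod_eq_prod, Finset.prod_eq_single i]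
    · simp [h]
    · intro j _ hji
      simp only [h]
      split_ifs with hlt hgt
      exacts [hf1 j, hg1 j, absurd (lt_or_gt_of_ne hji) (by tauto)]
    · simp
  have h_coord (u : ∀ i, E i → ℝ) (hu : ∀ i, 0 ≤ᵐ[μ i] u i) :
      ∀ᵐ x ∂Measure.pi μ, ∀ j, 0 ≤ u j (x j) :=
    ae_all_iff.2 fun j => Measure.tendsto_eval_ae_ae.eventually (hu j)
  calc ∫ x, |∏ i, f i (x i) - ∏ i, g i (x i)| ∂Measure.pi μ
      ≤ ∫ x, ∑ i, ∏ j, h i j (x j) ∂Measure.pi μ := by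
        refine integral_mono_of_nonneg (ae_of_all _ fun _ => abs_nonneg _)
          (integrable_finsetSum _ fun i _ => h_int i) ?_
        filter_upwards [h_coord f hf0, h_coord g hg0] with x hfx hgx using h_abs x hfx hgx
    _ = ∑ i, ∫ t, |f i t - g i t| ∂μ i := by
        rw [integral_finsetSum _ fun i _ => h_int i]
        exact Finset.sum_congr rfl fun i _ => h_integral i

end ProductDensities

theorem norm_integral_mul_ofReal_le {X : Type*} [MeasurableSpace X] {ν : Measure X}
    {b : X → ℂ} {D : X → ℝ} {C : ℝ} (hb : ∀ᵐ x ∂ν, ‖b x‖ ≤ C) (hD : Integrable D ν) :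
    ‖∫ x, b x * D x ∂ν‖ ≤ C * ∫ x, |D x| ∂ν := by
  refine (norm_integral_le_of_norm_le (hD.abs.const_mul C) ?_).trans_eq (integral_const_mul _ _)
  filter_upwards [hb] with x hx
  rw [norm_mul, Complex.norm_real, Real.norm_eq_abs]
  exact mul_le_mul_of_nonneg_right hx (abs_nonneg _)

theorem ae_pi_restrict_Ioi_comp_sqrt {ι : Type*} [Fintype ι] {P : (ι → ℝ) → Prop}
    (h : ∀ᵐ r : ι → ℝ, (∀ i, 0 < r i) → P r) :
    ∀ᵐ r ∂Measure.pi fun _ : ι => volume.restrict (Ioi (0 : ℝ)), P fun i => √(r i) := by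
  rw [← Measure.restrict_pi_pi, ← volume_pi,
    ae_restrict_iff' (MeasurableSet.univ_pi fun _ => measurableSet_Ioi)]
  rw [ae_iff] at h ⊢
  -- the squaring map is differentiable, hence sends the null set of `h` to a null set
  refine measure_mono_null (fun r hr => ?_)
    (addHaar_image_eq_zero_of_differentiableOn_of_addHaar_eq_zero volume
      (f := fun s i => s i ^ 2) (by fun_prop) h)
  simp only [mem_univ_pi, mem_Ioi, mem_ofPred_eq, Classical.not_imp] at hr
  exact ⟨fun i => √(r i), by simpa [sqrt_pos] using hr, funext fun i => sq_sqrt (hr.1 i).le⟩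

noncomputable def gammaDensity (p : ℕ) (r : ℝ) : ℝ := r ^ p * exp (-r) / p !

namespace gammaDensity

lemma nonneg (p : ℕ) {r : ℝ} (hr : 0 ≤ r) : 0 ≤ gammaDensity p r := by
  unfold gammaDensity; positivity

lemma ae_nonneg (p : ℕ) : 0 ≤ᵐ[volume.restrict (Ioi 0)] gammaDensity p :=
  ae_restrict_of_forall_mem measurableSet_Ioi fun _ hr => nonneg p (le_of_lt hr)

lemma apply_eq_exp_neg_mul_rpow (p : ℕ) (r : ℝ) :
    gammaDensity p r = exp (-r) * r ^ ((p + 1 : ℝ) - 1) / p ! := by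
  rw [add_sub_cancel_right, rpow_natCast, gammaDensity, mul_comm]

lemma integrableOn (p : ℕ) : IntegrableOn (gammaDensity p) (Ioi 0) := by
  simp_rw [funext (apply_eq_exp_neg_mul_rpow p), div_eq_mul_inv]
  exact (GammaIntegral_convergent (by positivity)).mul_const _

lemma setIntegral_Ioi_eq_one (p : ℕ) : ∫ r in Ioi 0, gammaDensity p r = 1 := by
  simp_rw [apply_eq_exp_neg_mul_rpow, integral_div,
    ← Gamma_eq_integral (s := p + 1) (by positivity), Gamma_nat_eq_factorial]
  exact div_self (by positivity)

lemma setIntegral_abs_Ioi_eq_one (p : ℕ) : ∫ r in Ioi 0, |gammaDensity p r| = 1 := by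
  rw [setIntegral_congr_fun measurableSet_Ioi fun r hr => abs_of_nonneg (nonneg p hr.out.le),
    setIntegral_Ioi_eq_one]

lemma succ_apply (p : ℕ) (r : ℝ) : gammaDensity (p + 1) r = r / (p + 1) * gammaDensity p r := by
  simp only [gammaDensity, Nat.factorial_succ]
  push_cast
  field_simp
  ring

lemma hasDerivAt_succ (p : ℕ) (r : ℝ) :
    HasDerivAt (gammaDensity (p + 1)) (gammaDensity p r - gammaDensity (p + 1) r) r := by
  refine (((hasDerivAt_pow (p + 1) r).mul (hasDerivAt_neg r).exp).div_const
    ((p + 1)! : ℝ)).congr_deriv ?_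
  simp only [gammaDensity, Nat.factorial_succ, Nat.add_sub_cancel]
  push_cast
  field_simp
  ring

lemma tendsto_atTop_zero (p : ℕ) : Tendsto (gammaDensity p) atTop (nhds 0) :=
  (tendsto_pow_mul_exp_neg_atTop_nhds_zero p).div_const (p ! : ℝ) |>.trans_eq (by simp)

lemma setIntegral_abs_sub_succ (p : ℕ) :
    ∫ r in Ioi 0, |gammaDensity p r - gammaDensity (p + 1) r| =
      2 * gammaDensity (p + 1) (p + 1) := by
  set c : ℝ := p + 1
  have hc : 0 < c := by positivity
  set d : ℝ → ℝ := fun r => gammaDensity p r - gammaDensity (p + 1) r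
  have hd : IntegrableOn d (Ioi 0) := (integrableOn p).sub (integrableOn (p + 1))
  have hd_eq (r : ℝ) : d r = (1 - r / c) * gammaDensity p r := by
    simp only [d, succ_apply]; ring
  have hd_nonneg : ∀ r ∈ Ioc 0 c, 0 ≤ d r := fun r hr => by
    rw [hd_eq]
    exact mul_nonneg (by rw [sub_nonneg, div_le_one hc]; exact hr.2) (nonneg p hr.1.le)
  have hd_nonpos : ∀ r ∈ Ioi c, d r ≤ 0 := fun r hr => by
    rw [hd_eq]
    exact mul_nonpos_of_nonpos_of_nonneg (by rw [sub_nonpos, le_div_iff₀ hc]; linarith [hr.out])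
      (nonneg p (hc.trans hr).le)
  have h_left : ∫ r in Ioc 0 c, |d r| = gammaDensity (p + 1) c := by
    rw [setIntegral_congr_fun measurableSet_Ioc fun r hr => abs_of_nonneg (hd_nonneg r hr),
      ← intervalIntegral.integral_of_le hc.le,
      intervalIntegral.integral_eq_sub_of_hasDerivAt (fun r _ => hasDerivAt_succ p r)
        ((intervalIntegrable_iff_integrableOn_Ioc_of_le hc.le).2
          (hd.mono_set Ioc_subset_Ioi_self))]
    simp [gammaDensity]
  have h_right : ∫ r in Ioi c, |d r| = gammaDensity (p + 1) c := by
    rw [setIntegral_congr_fun measurableSet_Ioi fun r hr => abs_of_nonpos (hd_nonpos r hr),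
      integral_neg, integral_Ioi_of_hasDerivAt_of_tendsto' (fun r _ => hasDerivAt_succ p r)
        (hd.mono_set (Ioi_subset_Ioi hc.le)) (tendsto_atTop_zero (p + 1))]
    ring
  have hd_abs : IntegrableOn (fun r => |d r|) (Ioi 0) := hd.abs
  show ∫ r in Ioi 0, |d r| = 2 * gammaDensity (p + 1) c
  rw [← Ioc_union_Ioi_eq_Ioi hc.le, setIntegral_union Ioc_disjoint_Ioi_same measurableSet_Ioi
    (hd_abs.mono_set Ioc_subset_Ioi_self) (hd_abs.mono_set (Ioi_subset_Ioi hc.le)),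
    h_left, h_right]
  ring

lemma apply_self_le {q : ℕ} (hq : q ≠ 0) : gammaDensity q q ≤ 1 / √(2 * π * q) := by
  have h := Stirling.le_factorial_stirling q
  rw [div_pow, ← exp_nat_mul, mul_comm (q : ℝ) 1, one_mul] at h
  rw [gammaDensity, div_le_div_iff₀ (by positivity) (by positivity), one_mul]
  calc (q : ℝ) ^ q * exp (-q) * √(2 * π * q) = √(2 * π * q) * ((q : ℝ) ^ q / exp q) := by
        rw [exp_neg]; ring
    _ ≤ q ! := h

lemma setIntegral_abs_sub_succ_le (p : ℕ) :
    ∫ r in Ioi 0, |gammaDensity p r - gammaDensity (p + 1) r| ≤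
      2 * √(2 / π) * (√(p + 1) - √p) := by
  have h_stirling := apply_self_le (Nat.succ_ne_zero p)
  push_cast at h_stirling
  have h_sqrt : √(2 / π) * √(2 * π * (p + 1)) = 2 * √(p + 1) := by
    rw [← sqrt_mul (by positivity), show 2 / π * (2 * π * (p + 1)) = 2 ^ 2 * (p + 1) by
      field_simp, sqrt_mul (by positivity), sqrt_sq zero_le_two]
  calc ∫ r in Ioi 0, |gammaDensity p r - gammaDensity (p + 1) r|
      = 2 * gammaDensity (p + 1) (p + 1) := setIntegral_abs_sub_succ p
    _ ≤ 2 * (1 / √(2 * π * (p + 1))) := by gcongr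
    _ = √(2 / π) * (1 / √(p + 1)) := by
      field_simp
      linarith [h_sqrt]
    _ ≤ √(2 / π) * (2 * (√(p + 1) - √p)) := by
      gcongr
      exact one_div_sqrt_add_one_le p.cast_nonneg
    _ = 2 * √(2 / π) * (√(p + 1) - √p) := by ring

lemma integrableOn_abs_sub (p q : ℕ) :
    IntegrableOn (fun r => |gammaDensity p r - gammaDensity q r|) (Ioi 0) :=
  ((integrableOn p).sub (integrableOn q)).abs

lemma setIntegral_abs_sub_le_of_le {p q : ℕ} (hpq : p ≤ q) :
    ∫ r in Ioi 0, |gammaDensity p r - gammaDensity q r| ≤ 2 * √(2 / π) * (√q - √p) := by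
  induction q, hpq using Nat.le_induction with
  | base => simp
  | succ q _ ih =>
    calc ∫ r in Ioi 0, |gammaDensity p r - gammaDensity (q + 1) r|
        ≤ ∫ r in Ioi 0, (|gammaDensity p r - gammaDensity q r|
            + |gammaDensity q r - gammaDensity (q + 1) r|) :=
          integral_mono (integrableOn_abs_sub p (q + 1))
            ((integrableOn_abs_sub p q).add (integrableOn_abs_sub q (q + 1)))
            fun r => abs_sub_le _ _ _
      _ = (∫ r in Ioi 0, |gammaDensity p r - gammaDensity q r|)
            + ∫ r in Ioi 0, |gammaDensity q r - gammaDensity (q + 1) r| :=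
          integral_add (integrableOn_abs_sub p q) (integrableOn_abs_sub q (q + 1))
      _ ≤ 2 * √(2 / π) * (√q - √p) + 2 * √(2 / π) * (√(q + 1) - √q) :=
          add_le_add ih (setIntegral_abs_sub_succ_le q)
      _ = 2 * √(2 / π) * (√↑(q + 1) - √p) := by push_cast; ring

theorem setIntegral_abs_sub_le (p q : ℕ) :
    ∫ r in Ioi 0, |gammaDensity p r - gammaDensity q r| ≤ 2 * √(2 / π) * |√p - √q| := by
  rcases le_total p q with h | h
  · rw [abs_sub_comm, abs_of_nonneg (sub_nonneg.2 (sqrt_le_sqrt (Nat.cast_le.2 h)))]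
    exact setIntegral_abs_sub_le_of_le h
  · simp_rw [abs_sub_comm (gammaDensity p _)]
    rw [abs_of_nonneg (sub_nonneg.2 (sqrt_le_sqrt (Nat.cast_le.2 h)))]
    exact setIntegral_abs_sub_le_of_le h

variable {ι : Type*} [Fintype ι]

theorem integral_abs_prod_sub_prod_le (p q : ι → ℕ) :
    ∫ r, |∏ j, gammaDensity (p j) (r j) - ∏ j, gammaDensity (q j) (r j)|
        ∂(Measure.pi fun _ : ι => volume.restrict (Ioi 0)) ≤
      2 * √(2 / π) * ∑ j, |√(p j : ℝ) - √(q j : ℝ)| := by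
  rw [Finset.mul_sum]
  exact (integral_abs_prod_sub_prod_le_sum (fun _ => integrableOn _) (fun _ => integrableOn _)
    (fun _ => ae_nonneg _) (fun _ => ae_nonneg _) (fun _ => setIntegral_Ioi_eq_one _)
    (fun _ => setIntegral_Ioi_eq_one _)).trans
    (Finset.sum_le_sum fun j _ => setIntegral_abs_sub_le _ _)

theorem integral_abs_prod (p : ι → ℕ) :
    ∫ r, |∏ j, gammaDensity (p j) (r j)| ∂(Measure.pi fun _ : ι => volume.restrict (Ioi 0)) =
      1 := by
  simp only [Finset.abs_prod]
  rw [integral_fintype_prod_eq_prod fun j t => |gammaDensity (p j) t|]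
  simp [setIntegral_abs_Ioi_eq_one]

theorem integral_univ_pi_Ioi_eq_integral_mul_prod (p : ι → ℕ) (F : (ι → ℝ) → ℂ) :
    (1 / ∏ j, ((p j)! : ℂ)) *
      ∫ r in univ.pi fun _ : ι => Ioi (0 : ℝ),
        F r * (∏ j, (r j : ℂ) ^ p j) * (Real.exp (-(∑ j, r j)) : ℂ) =
      ∫ r, F r * ((∏ j, gammaDensity (p j) (r j) : ℝ) : ℂ)
        ∂Measure.pi fun _ : ι => volume.restrict (Ioi (0 : ℝ)) := by
  rw [← integral_const_mul, volume_pi, Measure.restrict_pi_pi]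
  congr 1 with r
  simp only [gammaDensity, ← Finset.sum_neg_distrib, Real.exp_sum]
  push_cast
  rw [Finset.prod_div_distrib, Finset.prod_mul_distrib]
  field_simp

end gammaDensity

/-- The eigenvalue function `γ_{n,a}` of a Toeplitz operator with bounded measurable
`k`-quasi-radial symbol `a` (with `‖a‖_∞ ≤ C` almost everywhere on `(0,∞)^k`) is
Lipschitz with constant `2√(2/π)·C` for the square-root metric `ρ_k`; in particular it is
bounded and uniformly continuous with respect to `ρ_k`. -/
theorem stmt11 (k : ℕ) (n : Fin k → ℕ) (hn : ∀ j, 1 ≤ n j)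
    (a : (Fin k → ℝ) → ℂ) (ha : Measurable a) (C : ℝ) (hC0 : 0 ≤ C)
    (hC : ∀ᵐ r : Fin k → ℝ ∂volume, (∀ i, 0 < r i) → ‖a r‖ ≤ C)
    (γ : (Fin k → ℕ) → ℂ)
    (hγ : ∀ m : Fin k → ℕ,
        γ m = (1 / ∏ j, ((m j + n j - 1).factorial : ℂ)) *
          ∫ r in Set.univ.pi fun _ : Fin k => Set.Ioi (0 : ℝ),
            a (fun j => Real.sqrt (r j)) *
              (∏ j, (r j : ℂ) ^ (m j + n j - 1)) *
              (Real.exp (-(∑ j, r j)) : ℂ)) :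
    (∀ m m' : Fin k → ℕ,
        ‖γ m - γ m'‖ ≤ 2 * Real.sqrt (2 / Real.pi) * C *
          ∑ i, |Real.sqrt (m i) - Real.sqrt (m' i)|) ∧
    (∃ C', ∀ m : Fin k → ℕ, ‖γ m‖ ≤ C') ∧
    (∀ ε > (0 : ℝ), ∃ δ > (0 : ℝ), ∀ m m' : Fin k → ℕ,
        (∑ i, |Real.sqrt (m i) - Real.sqrt (m' i)|) < δ → ‖γ m - γ m'‖ < ε) := by
  set ν : Measure (Fin k → ℝ) := Measure.pi fun _ => volume.restrict (Ioi 0)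
  set b : (Fin k → ℝ) → ℂ := fun r => a fun j => √(r j)
  set p : (Fin k → ℕ) → Fin k → ℕ := fun m j => m j + n j - 1
  set D : (Fin k → ℕ) → (Fin k → ℝ) → ℝ := fun m r => ∏ j, gammaDensity (p m j) (r j)
  have hb : ∀ᵐ r ∂ν, ‖b r‖ ≤ C := ae_pi_restrict_Ioi_comp_sqrt hC
  have hD m : Integrable (D m) ν :=
    Integrable.fintype_prod fun j => gammaDensity.integrableOn _
  have hγD m : γ m = ∫ r, b r * D m r ∂ν :=
    (hγ m).trans (gammaDensity.integral_univ_pi_Ioi_eq_integral_mul_prod (p m) b)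
  have hbD m : Integrable (fun r => b r * D m r) ν :=
    (hD m).ofReal.bdd_mul (ha.comp (by fun_prop)).aestronglyMeasurable hb
  have hp m m' i : |√(p m i : ℝ) - √(p m' i : ℝ)| ≤ |√(m i : ℝ) - √(m' i : ℝ)| := by
    simp only [p, Nat.add_sub_assoc (hn i), Nat.cast_add]
    exact abs_sqrt_add_sub_sqrt_add_le (Nat.cast_nonneg _) (Nat.cast_nonneg _)
      (Nat.cast_nonneg _)
  have hlip m m' : ‖γ m - γ m'‖ ≤ 2 * √(2 / π) * C * ∑ i, |√(m i) - √(m' i)| :=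
    calc ‖γ m - γ m'‖ = ‖∫ r, b r * ((D m r - D m' r : ℝ) : ℂ) ∂ν‖ := by
          rw [hγD, hγD, ← integral_sub (hbD m) (hbD m')]
          simp only [Complex.ofReal_sub, mul_sub]
      _ ≤ C * ∫ r, |D m r - D m' r| ∂ν := norm_integral_mul_ofReal_le hb ((hD m).sub (hD m'))
      _ ≤ C * (2 * √(2 / π) * ∑ i, |√(p m i : ℝ) - √(p m' i : ℝ)|) := by
          gcongr; exact gammaDensity.integral_abs_prod_sub_prod_le _ _
      _ ≤ C * (2 * √(2 / π) * ∑ i, |√(m i : ℝ) - √(m' i : ℝ)|) := by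
          gcongr C * (_ * ?_); exact Finset.sum_le_sum fun i _ => hp m m' i
      _ = 2 * √(2 / π) * C * ∑ i, |√(m i) - √(m' i)| := by ring
  refine ⟨hlip, ⟨C, fun m => ?_⟩,
    forall_exists_norm_sub_lt_of_norm_sub_le_mul (by positivity) hlip⟩
  calc ‖γ m‖ ≤ C * ∫ r, |D m r| ∂ν := hγD m ▸ norm_integral_mul_ofReal_le hb (hD m)
    _ = C := by rw [gammaDensity.integral_abs_prod, mul_one]
end

section
/- Define g : ℕ₀ × (0,∞) → ℝ by g(m,r) = 2r^{2m+1}e^{−r²}/m! and h : ℝ → ℝ by h(x) = √(2/π) e^{−2x²}. Then lim_{m→∞} ∫₀^∞ |g(m,r) − h(√m − r)| dr = 0. -/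
/-!
After the substitution `r = √m + x` the integral is bounded by `∫ |fₘ(x) - h(x)| dx`, where `fₘ`
is the density of `√X - √m` for `X ~ Γ(m + 1, 1)` and `h` is the `N(0, 1/4)` density. Stirling's
formula and `log (1 + t) = t - t² / 2 + O(t³)` give `fₘ → h` pointwise; since all of them are
probability densities, Scheffé's lemma upgrades this to convergence in `L¹`.
-/

open MeasureTheory ProbabilityTheory Real Set Filter Topology Stirling
open scoped Nat NNReal

theorem abs_min_le_abs_of_nonneg {a b : ℝ} (ha : 0 ≤ a) : |min a b| ≤ |b| := by
  rw [abs_le]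
  exact ⟨le_min (by linarith [abs_nonneg b]) (neg_abs_le b),
    (min_le_right a b).trans (le_abs_self b)⟩

theorem tendsto_integral_abs_sub_of_tendsto_integral {α ι : Type*} [MeasurableSpace α]
    {μ : Measure α} {l : Filter ι} [l.IsCountablyGenerated] {f : ι → α → ℝ} {g : α → ℝ}
    (hf_nonneg : ∀ i, 0 ≤ᵐ[μ] f i) (hf : ∀ i, Integrable (f i) μ) (hg : Integrable g μ)
    (h_integral : Tendsto (fun i ↦ ∫ x, f i x ∂μ) l (𝓝 (∫ x, g x ∂μ)))
    (h_lim : ∀ᵐ x ∂μ, Tendsto (fun i ↦ f i x) l (𝓝 (g x))) :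
    Tendsto (fun i ↦ ∫ x, |f i x - g x| ∂μ) l (𝓝 0) := by
  -- `|a - b| = a + b - 2 min a b`, and `min (f i) g` converges by dominated convergence
  have h_min : Tendsto (fun i ↦ ∫ x, min (f i x) (g x) ∂μ) l (𝓝 (∫ x, g x ∂μ)) := by
    refine tendsto_integral_filter_of_dominated_convergence (fun x ↦ |g x|)
      (.of_forall fun i ↦ ((hf i).inf hg).aestronglyMeasurable)
      (.of_forall fun i ↦ ?_) hg.abs ?_
    · filter_upwards [hf_nonneg i] with x hx
      exact abs_min_le_abs_of_nonneg hx
    · filter_upwards [h_lim] with x hx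
      simpa using hx.min (tendsto_const_nhds (x := g x))
  have h_abs : ∀ i, ∫ x, |f i x - g x| ∂μ
      = ∫ x, f i x ∂μ + ∫ x, g x ∂μ - 2 * ∫ x, min (f i x) (g x) ∂μ := fun i ↦ by
    have h_sum : Integrable (fun x ↦ f i x + g x) μ := (hf i).add hg
    have h_min_int : Integrable (fun x ↦ 2 * min (f i x) (g x)) μ := ((hf i).inf hg).const_mul 2
    rw [← integral_add (hf i) hg, ← integral_const_mul, ← integral_sub h_sum h_min_int]
    congr 1 with x
    linarith [max_sub_min_eq_abs' (f i x) (g x), min_add_max (f i x) (g x)]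
  simp_rw [h_abs]
  convert (h_integral.add tendsto_const_nhds).sub (h_min.const_mul 2) using 2
  ring

theorem gaussianPDFReal_one_div_four (μ x : ℝ) :
    gaussianPDFReal μ (1 / 4) x = √(2 / π) * exp (-2 * (x - μ) ^ 2) := by
  rw [gaussianPDFReal]
  push_cast
  congr 1
  · rw [← sqrt_inv]; congr 1; field_simp; norm_num
  · congr 1; ring

theorem abs_two_mul_log_one_add_sub_le {t : ℝ} (ht : |t| ≤ 1 / 2) :
    |2 * log (1 + t) - 2 * t + t ^ 2| ≤ 4 * |t| ^ 3 := by
  have h_taylor : |-t + t ^ 2 / 2 + log (1 + t)| ≤ |t| ^ 3 / (1 - |t|) := by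
    have := abs_log_sub_add_sum_range_le (x := -t) (by rw [abs_neg]; linarith) 2
    norm_num [Finset.sum_range_succ] at this
    convert this using 3
  calc |2 * log (1 + t) - 2 * t + t ^ 2| = 2 * |-t + t ^ 2 / 2 + log (1 + t)| := by
        rw [← abs_two, ← abs_mul, abs_two]; ring_nf
    _ ≤ 2 * (|t| ^ 3 / (1 - |t|)) := by gcongr
    _ ≤ 4 * |t| ^ 3 := by
        rw [mul_div_assoc', div_le_iff₀ (by linarith)]
        nlinarith [pow_nonneg (abs_nonneg t) 3]

theorem tendsto_sq_mul_log_one_add_div (x : ℝ) :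
    Tendsto (fun s : ℝ ↦ (2 * s ^ 2 + 1) * log (1 + x / s) - 2 * s * x) atTop
      (𝓝 (-x ^ 2)) := by
  have h_div : Tendsto (fun s : ℝ ↦ x / s) atTop (𝓝 0) :=
    tendsto_const_nhds.div_atTop tendsto_id
  have h_log : Tendsto (fun s : ℝ ↦ log (1 + x / s)) atTop (𝓝 0) := by
    have h_one : Tendsto (fun s : ℝ ↦ 1 + x / s) atTop (𝓝 1) := by
      simpa using h_div.const_add 1
    simpa using h_one.log one_ne_zero
  -- the cubic Taylor remainder, multiplied by `s ^ 2`, is `O(1 / s)`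
  have h_rem : Tendsto (fun s : ℝ ↦ s ^ 2 * (2 * log (1 + x / s) - 2 * (x / s) + (x / s) ^ 2))
      atTop (𝓝 0) := by
    refine squeeze_zero_norm' ?_ (tendsto_const_nhds (x := 4 * |x| ^ 3).div_atTop tendsto_id)
    filter_upwards [h_div.abs.eventually (ge_mem_nhds (by norm_num : |(0 : ℝ)| < 1 / 2)),
      eventually_gt_atTop 0] with s hs hs0
    rw [norm_mul, norm_pow, Real.norm_eq_abs, abs_of_pos hs0]
    calc s ^ 2 * |2 * log (1 + x / s) - 2 * (x / s) + (x / s) ^ 2|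
        ≤ s ^ 2 * (4 * |x / s| ^ 3) := by gcongr; exact abs_two_mul_log_one_add_sub_le hs
      _ = 4 * |x| ^ 3 / s := by rw [abs_div, abs_of_pos hs0]; field_simp
  have h_sum := (h_rem.add h_log).sub_const (x ^ 2)
  rw [zero_add, zero_sub] at h_sum
  refine h_sum.congr' ?_
  filter_upwards [eventually_gt_atTop 0] with s hs
  field_simp
  ring

theorem rpow_natCast_mul_exp_neg_rpow_two (n : ℕ) :
    (fun x : ℝ ↦ x ^ (n : ℝ) * exp (-x ^ (2 : ℝ))) = fun x ↦ x ^ n * exp (-x ^ 2) := by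
  ext x
  rw [rpow_natCast, rpow_two]

theorem integrableOn_pow_mul_exp_neg_sq (n : ℕ) :
    IntegrableOn (fun x : ℝ ↦ x ^ n * exp (-x ^ 2)) (Ioi 0) := by
  rw [← rpow_natCast_mul_exp_neg_rpow_two]
  exact integrableOn_rpow_mul_exp_neg_rpow (by linarith [n.cast_nonneg (α := ℝ)]) two_pos

theorem integral_pow_mul_exp_neg_sq (n : ℕ) :
    ∫ x in Ioi (0 : ℝ), x ^ n * exp (-x ^ 2) = Gamma ((n + 1) / 2) / 2 := by
  rw [← rpow_natCast_mul_exp_neg_rpow_two,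
    integral_rpow_mul_exp_neg_rpow two_pos (by linarith [n.cast_nonneg (α := ℝ)])]
  ring

/-- The density of `√X` for `X` Gamma-distributed with shape `m + 1` and rate `1`. -/
noncomputable def sqrtGammaPDF (m : ℕ) : ℝ → ℝ :=
  (Ioi 0).indicator fun r ↦ 2 * r ^ (2 * m + 1) * exp (-r ^ 2) / m !

theorem sqrtGammaPDF_nonneg (m : ℕ) (r : ℝ) : 0 ≤ sqrtGammaPDF m r :=
  indicator_nonneg (fun r (hr : 0 < r) ↦ by positivity) r

theorem integrable_sqrtGammaPDF (m : ℕ) : Integrable (sqrtGammaPDF m) := by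
  refine IntegrableOn.integrable_indicator ?_ measurableSet_Ioi
  have h := ((integrableOn_pow_mul_exp_neg_sq (2 * m + 1)).const_mul 2).div_const (m ! : ℝ)
  simp only [mul_assoc] at h ⊢
  exact h

theorem integral_sqrtGammaPDF (m : ℕ) : ∫ r, sqrtGammaPDF m r = 1 := by
  have h_gamma : Gamma (((2 * m + 1 : ℕ) + 1 : ℝ) / 2) = m ! := by
    rw [← Gamma_nat_eq_factorial]; congr 1; push_cast; ring
  have h_fun : (fun r : ℝ ↦ 2 * r ^ (2 * m + 1) * exp (-r ^ 2) / m !)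
      = fun r ↦ 2 / m ! * (r ^ (2 * m + 1) * exp (-r ^ 2)) := by
    ext r; ring
  rw [sqrtGammaPDF, integral_indicator measurableSet_Ioi, h_fun, integral_const_mul,
    integral_pow_mul_exp_neg_sq, h_gamma]
  field_simp

theorem sqrtGammaPDF_sqrt_add {m : ℕ} (hm : m ≠ 0) {x : ℝ} (hx : 0 < √m + x) :
    sqrtGammaPDF m (√m + x) =
      √2 / stirlingSeq m * ((1 + x / √m) ^ (2 * m + 1) * exp (-2 * √m * x)) * exp (-x ^ 2) := by
  have hs : 0 < √(m : ℝ) := sqrt_pos.2 (by positivity)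
  have hss : √(m : ℝ) ^ 2 = m := sq_sqrt m.cast_nonneg
  rw [sqrtGammaPDF, indicator_of_mem (mem_Ioi.2 hx), stirlingSeq, sqrt_mul zero_le_two,
    div_pow, ← exp_nat_mul, mul_one]
  have h_pow : (√m + x) ^ (2 * m + 1) = (m : ℝ) ^ m * √m * (1 + x / √m) ^ (2 * m + 1) := by
    rw [show √m + x = √m * (1 + x / √m) by field_simp, mul_pow, pow_succ, pow_mul, hss]
  have h_exp : exp (-(√m + x) ^ 2) = exp (-2 * √m * x) * exp (-x ^ 2) / exp m := by
    rw [← exp_add, ← exp_sub]; congr 1; linear_combination -hss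
  rw [h_pow, h_exp]
  field_simp
  rw [sq_sqrt zero_le_two]

theorem tendsto_one_add_div_sqrt_pow_mul_exp (x : ℝ) :
    Tendsto (fun m : ℕ ↦ (1 + x / √m) ^ (2 * m + 1) * exp (-2 * √m * x)) atTop
      (𝓝 (exp (-x ^ 2))) := by
  have h_sqrt : Tendsto (fun m : ℕ ↦ √(m : ℝ)) atTop atTop :=
    tendsto_sqrt_atTop.comp tendsto_natCast_atTop_atTop
  refine ((continuous_exp.tendsto _).comp
    ((tendsto_sq_mul_log_one_add_div x).comp h_sqrt)).congr' ?_
  filter_upwards [h_sqrt.eventually_gt_atTop |x|] with m hm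
  have hs : 0 < √(m : ℝ) := (abs_nonneg x).trans_lt hm
  have h_pos : 0 < 1 + x / √m := by
    have : -1 < x / √m := by
      rw [lt_div_iff₀ hs]; linarith [neg_abs_le x]
    linarith
  simp only [Function.comp_apply, sq_sqrt m.cast_nonneg]
  rw [sub_eq_add_neg, exp_add, show 2 * (m : ℝ) + 1 = (2 * m + 1 : ℕ) by push_cast; ring,
    exp_nat_mul, exp_log h_pos]
  ring_nf

theorem tendsto_sqrtGammaPDF_sqrt_add (x : ℝ) :
    Tendsto (fun m : ℕ ↦ sqrtGammaPDF m (√m + x)) atTop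
      (𝓝 (gaussianPDFReal 0 (1 / 4) x)) := by
  have h_sqrt : Tendsto (fun m : ℕ ↦ √(m : ℝ)) atTop atTop :=
    tendsto_sqrt_atTop.comp tendsto_natCast_atTop_atTop
  have h_stirling := (tendsto_const_nhds (x := √2)).div tendsto_stirlingSeq_sqrt_pi
    (sqrt_ne_zero'.2 pi_pos)
  have h_lim := (h_stirling.mul (tendsto_one_add_div_sqrt_pow_mul_exp x)).mul_const
    (exp (-x ^ 2))
  rw [gaussianPDFReal_one_div_four]
  convert h_lim.congr' ?_ using 2
  · rw [sqrt_div' _ pi_pos.le, sub_zero, mul_assoc, ← exp_add]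
    ring_nf
  · filter_upwards [eventually_ne_atTop 0, h_sqrt.eventually_gt_atTop (-x)] with m hm hmx
    exact (sqrtGammaPDF_sqrt_add hm (by linarith)).symm

theorem tendsto_integral_abs_sqrtGammaPDF_sqrt_add_sub_gaussianPDFReal :
    Tendsto (fun m : ℕ ↦ ∫ x, |sqrtGammaPDF m (√m + x) - gaussianPDFReal 0 (1 / 4) x|) atTop
      (𝓝 0) := by
  refine tendsto_integral_abs_sub_of_tendsto_integral
    (fun m ↦ ae_of_all _ fun x ↦ sqrtGammaPDF_nonneg m _)
    (fun m ↦ (integrable_sqrtGammaPDF m).comp_add_left _) (integrable_gaussianPDFReal 0 _) ?_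
    (ae_of_all _ tendsto_sqrtGammaPDF_sqrt_add)
  simp_rw [integral_add_left_eq_self (sqrtGammaPDF _), integral_sqrtGammaPDF,
    integral_gaussianPDFReal_eq_one 0 (by norm_num : (1 / 4 : ℝ≥0) ≠ 0)]
  exact tendsto_const_nhds

/-- With `g(m,r) = 2 r^{2m+1} e^{−r²}/m!` and `h(x) = √(2/π) e^{−2x²}`,
`∫₀^∞ |g(m,r) − h(√m − r)| dr → 0` as `m → ∞`. -/
theorem stmt12 :
    Filter.Tendsto
      (fun m : ℕ => ∫ r in Set.Ioi (0 : ℝ),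
        |2 * r ^ (2 * m + 1) * Real.exp (-r ^ 2) / (m.factorial : ℝ) -
          Real.sqrt (2 / Real.pi) * Real.exp (-2 * (Real.sqrt m - r) ^ 2)|)
      Filter.atTop (nhds 0) := by
  refine squeeze_zero (fun m ↦ integral_nonneg fun r ↦ abs_nonneg _) (fun m ↦ ?_)
    tendsto_integral_abs_sqrtGammaPDF_sqrt_add_sub_gaussianPDFReal
  have h_int : Integrable fun r ↦ |sqrtGammaPDF m r - gaussianPDFReal √m (1 / 4) r| :=
    ((integrable_sqrtGammaPDF m).sub (integrable_gaussianPDFReal _ _)).abs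
  calc _ = ∫ r in Ioi 0, |sqrtGammaPDF m r - gaussianPDFReal √m (1 / 4) r| := by
        refine setIntegral_congr_fun measurableSet_Ioi fun r hr ↦ ?_
        rw [sqrtGammaPDF, indicator_of_mem hr, gaussianPDFReal_one_div_four, sub_sq_comm]
    _ ≤ ∫ r, |sqrtGammaPDF m r - gaussianPDFReal √m (1 / 4) r| :=
        setIntegral_le_integral h_int (ae_of_all _ fun r ↦ abs_nonneg _)
    _ = ∫ x, |sqrtGammaPDF m (√m + x) - gaussianPDFReal 0 (1 / 4) x| := by
        rw [← integral_add_left_eq_self _ √m]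
        simp_rw [add_comm √(m : ℝ), gaussianPDFReal_add, sub_self]
end
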